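/- Let C_k(𝒜, v) be a generalized affine Cartesian code with 1 ≤ k ≤ Σ_{i=1}^m (n_i − 1), and set k′ := Σ_{i=1}^m (n_i − 1) − k + 1. Then dim_K C_k(𝒜, v) + dim_K C_{k′}(𝒜, v) = n_1⋯n_m. -/

import Mathlib

open MvPolynomial

/-- The points of the Cartesian set `𝒜 = A 0 × ⋯ × A (m-1)`. -/
abbrev CartPts {K : Type*} {m : ℕ} (A : Fin m → Finset K) :=
  { x : Fin m → K // ∀ i, x i ∈ A i }

/-- The space `S_{<k}` of multivariate polynomials of total degree less than `k`. -/
def degLT (K : Type*) [Field K] (m k : ℕ) : Submodule K (MvPolynomial (Fin m) K) where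
  carrier := {f | ∀ d ∈ f.support, (d.sum fun _ e => e) < k}
  zero_mem' := by simp
  add_mem' := fun {f g} hf hg d hd => by
    rcases Finset.mem_union.mp (MvPolynomial.support_add hd) with h | h
    exacts [hf d h, hg d h]
  smul_mem' := fun c f hf d hd => hf d (MvPolynomial.support_smul hd)

/-- The evaluation map `ev : f ↦ (v_a · f(a))_{a ∈ 𝒜}`. -/
noncomputable def evalLM {K : Type*} [Field K] {m : ℕ} (A : Fin m → Finset K)
    (v : CartPts A → K) : MvPolynomial (Fin m) K →ₗ[K] (CartPts A → K) :=
  LinearMap.pi fun a => v a • (MvPolynomial.aeval (a.1 : Fin m → K)).toLinearMap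

/-- The generalized affine Cartesian code `C_k(𝒜, v)`, the image of `S_{<k}` under `ev_k`. -/
noncomputable def cartCode {K : Type*} [Field K] {m : ℕ} (k : ℕ) (A : Fin m → Finset K)
    (v : CartPts A → K) : Submodule K (CartPts A → K) :=
  Submodule.map (evalLM A v) (degLT K m k)

/-! Dividing by the polynomials `∏ s ∈ A i, (X i - C s)`, which vanish on `𝒜`, for the
degree-lexicographic order does not raise the total degree, so `C_k(𝒜, v)` is already the image
of the polynomials supported on exponents `d` with `d i < n_i` and `|d| < k`. Such a reduced
polynomial vanishing on `𝒜` is zero (the easy half of the Combinatorial Nullstellensatz), and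
`v` has no zero entries, so `dim C_k(𝒜, v)` is the number of `t ∈ ∏ [0, n_i)` with `|t| < k`.
The involution `t i ↦ n_i - 1 - t i` turns `|t| < k'` into `|t| ≥ k`, so the two counts add up
to `n_1 ⋯ n_m`. -/
open Finset MonomialOrder

namespace MonomialOrder

theorem degree_prod_X_sub_C {σ R : Type*} [CommRing R] [Nontrivial R] (mo : MonomialOrder σ)
    (S : Finset R) (i : σ) : mo.degree (∏ s ∈ S, (X i - C s)) = Finsupp.single i #S := by
  rw [degree_prod_of_regular fun s _ => by
    simp [(mo.monic_X_sub_C i s).leadingCoeff_eq_one, isRegular_one]]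
  simp [mo.degree_X_sub_C]

end MonomialOrder

theorem totalDegree_lt_of_mem_restrictSupport {R σ : Type*} [CommSemiring R] {k : ℕ}
    {f : MvPolynomial σ R} (hf : f ∈ restrictSupport R {d | d.degree < k}) (hf0 : f ≠ 0) :
    f.totalDegree < k := by
  obtain ⟨e, he⟩ := support_nonempty.mpr hf0
  exact (Finset.sup_lt_iff ((Nat.zero_le _).trans_lt (hf he))).mpr fun d hd => hf hd

def reducedExponents {ι : Type*} (n : ι → ℕ) (k : ℕ) : Set (ι →₀ ℕ) :=
  {d | (∀ i, d i < n i) ∧ d.degree < k}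

noncomputable def reducedExponentsEquiv {ι : Type*} [Fintype ι] (n : ι → ℕ) (k : ℕ) :
    reducedExponents n k ≃ {t : ∀ i, Fin (n i) // ∑ i, (t i : ℕ) < k} where
  toFun d := ⟨fun i => ⟨d.1 i, d.2.1 i⟩, by
    simpa [← Finsupp.degree_eq_sum] using d.2.2⟩
  invFun t := ⟨Finsupp.equivFunOnFinite.symm fun i => t.1 i,
    fun i => by simp, by simpa [Finsupp.degree_eq_sum] using t.2⟩
  left_inv d := by ext; simp
  right_inv t := by ext; simp

theorem card_reducedExponents {ι : Type*} [Fintype ι] [DecidableEq ι] (n : ι → ℕ) (k : ℕ) :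
    Nat.card (reducedExponents n k) = #{t : ∀ i, Fin (n i) | ∑ i, (t i : ℕ) < k} := by
  rw [Nat.card_congr (reducedExponentsEquiv n k), Nat.card_eq_fintype_card,
    Fintype.card_subtype]

section

variable {K : Type*} [Field K] {m : ℕ}

theorem evalLM_apply (A : Fin m → Finset K) (v : CartPts A → K) (f : MvPolynomial (Fin m) K)
    (a : CartPts A) : evalLM A v f a = v a * aeval a.1 f := rfl

theorem degLT_eq_restrictSupport (k : ℕ) :
    degLT K m k = restrictSupport K {d | d.degree < k} := rfl

theorem eq_zero_of_reduced_of_evalLM_eq_zero {A : Fin m → Finset K} {v : CartPts A → K}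
    (hv : ∀ a, v a ≠ 0) {f : MvPolynomial (Fin m) K} (hf : f ∈ restrictSupport K {d | ∀ i, d i < #(A i)})
    (h : evalLM A v f = 0) : f = 0 := by
  by_contra hne
  refine hne (eq_zero_of_eval_zero_at_prod_finset f A (fun i => ?_) fun x hx => ?_)
  · obtain ⟨d, hd⟩ := support_nonempty.mpr hne
    rw [degreeOf_lt_iff ((Nat.zero_le _).trans_lt (hf hd i))]
    exact fun d hd => hf hd i
  · simpa [evalLM_apply, hv] using congrFun h ⟨x, hx⟩

theorem evalLM_linearCombination_prod_X_sub_C (A : Fin m → Finset K) (v : CartPts A → K)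
    (g : Fin m →₀ MvPolynomial (Fin m) K) :
    evalLM A v (Finsupp.linearCombination _ (fun i => ∏ s ∈ A i, (X i - C s)) g) = 0 := by
  funext a
  rw [evalLM_apply, Finsupp.linearCombination_apply, map_finsuppSum, Pi.zero_apply]
  refine mul_eq_zero_of_right _ (sum_eq_zero fun i _ => ?_)
  dsimp only
  rw [smul_eq_mul, map_mul, map_prod, prod_eq_zero (a.2 i) (by simp), mul_zero]

theorem exists_reduced_evalLM_eq (A : Fin m → Finset K) (v : CartPts A → K)
    (f : MvPolynomial (Fin m) K) :
    ∃ r ∈ restrictSupport K {d | ∀ i, d i < #(A i)},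
      r.totalDegree ≤ f.totalDegree ∧ evalLM A v r = evalLM A v f := by
  have hmonic (i : Fin m) : degLex.Monic (∏ s ∈ A i, (X i - C s)) :=
    Monic.prod fun s _ => degLex.monic_X_sub_C i s
  obtain ⟨g, r, hf, hdeg, hr⟩ := degLex.div (b := fun i => ∏ s ∈ A i, (X i - C s))
    (fun i => by simp [(hmonic i).leadingCoeff_eq_one]) f
  refine ⟨r, fun d hd i => ?_, ?_, ?_⟩
  · simpa [degLex.degree_prod_X_sub_C, Finsupp.single_le_iff] using hr d hd i
  · rw [eq_sub_of_add_eq' hf.symm]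
    refine (totalDegree_sub _ _).trans (max_le le_rfl ?_)
    rw [Finsupp.linearCombination_apply, Finsupp.sum]
    refine (totalDegree_finsetSum _ _).trans (Finset.sup_le fun i _ => ?_)
    rw [smul_eq_mul, mul_comm]
    exact degLex_totalDegree_monotone (hdeg i)
  · rw [hf, map_add, evalLM_linearCombination_prod_X_sub_C, zero_add]

theorem cartCode_eq_map_restrictSupport (A : Fin m → Finset K) (v : CartPts A → K) (k : ℕ) :
    cartCode k A v =
      (restrictSupport K (reducedExponents (fun i => #(A i)) k)).map (evalLM A v) := by
  rw [cartCode, degLT_eq_restrictSupport]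
  refine le_antisymm ?_ (Submodule.map_mono (restrictSupport_mono K fun d hd => hd.2))
  rintro _ ⟨f, hf, rfl⟩
  rcases eq_or_ne f 0 with rfl | hf0
  · exact ⟨0, zero_mem _, rfl⟩
  obtain ⟨r, hr, hdeg, heq⟩ := exists_reduced_evalLM_eq A v f
  refine ⟨r, fun d hd => ⟨hr hd, ?_⟩, heq⟩
  calc d.degree ≤ r.totalDegree := le_totalDegree hd
    _ ≤ f.totalDegree := hdeg
    _ < k := totalDegree_lt_of_mem_restrictSupport hf hf0

theorem finrank_cartCode {A : Fin m → Finset K} {v : CartPts A → K} (hv : ∀ a, v a ≠ 0)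
    (k : ℕ) :
    Module.finrank K (cartCode k A v) = #{t : ∀ i, Fin #(A i) | ∑ i, (t i : ℕ) < k} := by
  have hinj : Function.Injective
      ((evalLM A v).domRestrict (restrictSupport K (reducedExponents (fun i => #(A i)) k))) := by
    refine (injective_iff_map_eq_zero _).mpr fun f hf => Subtype.ext ?_
    exact eq_zero_of_reduced_of_evalLM_eq_zero hv
      (restrictSupport_mono K (fun d hd => hd.1) f.2) hf
  rw [cartCode_eq_map_restrictSupport, ← LinearMap.range_domRestrict,
    LinearMap.finrank_range_of_inj hinj,
    Module.finrank_eq_nat_card_basis (basisRestrictSupport K _), card_reducedExponents]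

end

theorem sum_val_rev_add_sum_val {ι : Type*} [Fintype ι] {n : ι → ℕ} (t : ∀ i, Fin (n i)) :
    ∑ i, ((t i).rev : ℕ) + ∑ i, (t i : ℕ) = ∑ i, (n i - 1) := by
  rw [← sum_add_distrib]
  exact sum_congr rfl fun i _ => by rw [Fin.val_rev]; have := (t i).isLt; omega

theorem card_sum_lt_add_card_sum_lt {ι : Type*} [Fintype ι] [DecidableEq ι] (n : ι → ℕ)
    {k : ℕ} (hk : k ≤ ∑ i, (n i - 1)) :
    #{t : ∀ i, Fin (n i) | ∑ i, (t i : ℕ) < k} +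
      #{t : ∀ i, Fin (n i) | ∑ i, (t i : ℕ) < ∑ i, (n i - 1) - k + 1} = ∏ i, n i := by
  have hrev : #{t : ∀ i, Fin (n i) | ∑ i, (t i : ℕ) < ∑ i, (n i - 1) - k + 1} =
      #{t : ∀ i, Fin (n i) | ¬ ∑ i, (t i : ℕ) < k} := by
    refine card_equiv (Equiv.piCongrRight fun _ => Fin.revPerm) fun t => ?_
    have := sum_val_rev_add_sum_val t
    simp only [mem_filter, mem_univ, true_and, Equiv.piCongrRight_apply, Pi.map_apply,
      Fin.revPerm_apply]
    omega
  rw [hrev, card_filter_add_card_filter_not, card_univ, Fintype.card_pi]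
  simp

theorem finrank_cartCode_add_finrank_cartCode_general {K : Type*} [Field K]
    {m : ℕ} (A : Fin m → Finset K)
    (v : CartPts A → K) (hv : ∀ a, v a ≠ 0) (k : ℕ)
    (hk2 : k ≤ ∑ i, ((A i).card - 1)) :
    Module.finrank K (cartCode k A v) +
      Module.finrank K (cartCode (∑ i, ((A i).card - 1) - k + 1) A v) = ∏ i, (A i).card := by
  rw [finrank_cartCode hv, finrank_cartCode hv]
  exact card_sum_lt_add_card_sum_lt (fun i => #(A i)) hk2

/-- With `k' = Σ (n_i − 1) − k + 1`, `dim C_k(𝒜,v) + dim C_{k'}(𝒜,v) = n_1 ⋯ n_m`. -/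
theorem finrank_cartCode_add_finrank_cartCode {K : Type*} [Field K] [Fintype K] [DecidableEq K]
    {m : ℕ} (hm : 1 ≤ m) (A : Fin m → Finset K) (hA : ∀ i, (A i).Nonempty)
    (v : CartPts A → K) (hv : ∀ a, v a ≠ 0) (k : ℕ) (hk : 1 ≤ k)
    (hk2 : k ≤ ∑ i, ((A i).card - 1)) :
    Module.finrank K (cartCode k A v) +
      Module.finrank K (cartCode (∑ i, ((A i).card - 1) - k + 1) A v) = ∏ i, (A i).card :=
  finrank_cartCode_add_finrank_cartCode_general A v hv k hk2
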